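/- arXiv:2407.16440 — 4 statements merged into one kernel-verified Lean document; each statement's English description precedes it below -/
import Mathlib

section
/- Let 1 → A → B → C → 1 be a short exact sequence of groups, where A has no proper finite-index subgroup, and let Z be a finite abelian group. If f : C × C → Z is a 2-cocycle such that the inflated cocycle f ∘ (β × β) : B × B → Z is a 2-coboundary, then f itself is a 2-coboundary. (Injectivity of the inflation map on second cohomology.) -/
def IsCocycle {G Z : Type*} [Group G] [AddCommGroup Z] (f : G → G → Z) : Prop :=
  (∀ x, f x 1 = 0) ∧ (∀ x, f 1 x = 0) ∧
    ∀ x y z, f x y + f (x * y) z = f x (y * z) + f y z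

def IsCoboundary {G Z : Type*} [Group G] [AddCommGroup Z] (f : G → G → Z) : Prop :=
  ∃ h : G → Z, h 1 = 0 ∧ ∀ x y, f x y = h (x * y) - h x - h y

def NoFiniteIndex (G : Type*) [Group G] : Prop :=
  ∀ H : Subgroup G, H.index ≠ 0 → H = ⊤

/-- injectivity of inflation. Given `1 → A → B → C → 1` with
`A = ker β` having no proper finite-index subgroup and `Z` finite abelian, if a
2-cocycle `f` on `C` inflates to a 2-coboundary on `B`, then `f` is a 2-coboundary. -/
theorem stmt7 {B C Z : Type*} [Group B] [Group C] [AddCommGroup Z] [Finite Z]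
    (β : B →* C) (hβ : Function.Surjective β)
    (hA : NoFiniteIndex β.ker)
    (f : C → C → Z) (hf : IsCocycle f)
    (hinfl : IsCoboundary (fun x y => f (β x) (β y))) :
    IsCoboundary f := by
  obtain ⟨h, h1, hcob⟩ := hinfl
  simp only at hcob
  -- h restricted to ker β is a homomorphism
  have hadd : ∀ a b : B, a ∈ β.ker → h (a * b) = h a + h b := by
    intro a b ha
    have hc := hcob a b
    rw [MonoidHom.mem_ker] at ha
    rw [ha, hf.2.1 (β b)] at hc
    have : h (a * b) - h a - h b = 0 := hc.symm
    linear_combination (norm := abel) this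
  -- the homomorphism from ker β to Multiplicative Z
  let φ : β.ker →* Multiplicative Z :=
    { toFun := fun a => Multiplicative.ofAdd (h a)
      map_one' := by simp [h1]
      map_mul' := by
        intro a b
        have := hadd a b a.2
        simp only [Subgroup.coe_mul, this]
        rfl }
  have hidx : φ.ker.index ≠ 0 := by
    rw [Subgroup.index_ker]
    exact Nat.card_pos.ne'
  have hkertop : φ.ker = ⊤ := hA φ.ker hidx
  have hzero : ∀ a : B, a ∈ β.ker → h a = 0 := by
    intro a ha
    have : (⟨a, ha⟩ : β.ker) ∈ φ.ker := hkertop ▸ Subgroup.mem_top _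
    rw [MonoidHom.mem_ker] at this
    simpa [φ] using congrArg Multiplicative.toAdd this
  -- h is constant on fibers of β
  have hconst : ∀ x y : B, β x = β y → h x = h y := by
    intro x y hxy
    have hk : x * y⁻¹ ∈ β.ker := by
      rw [MonoidHom.mem_ker, map_mul, map_inv, hxy, mul_inv_cancel]
    have := hadd (x * y⁻¹) y hk
    rw [hzero _ hk, zero_add, inv_mul_cancel_right] at this
    exact this
  -- define H on C via a section
  refine ⟨fun c => h (Function.surjInv hβ c), ?_, ?_⟩
  · have : Function.surjInv hβ (1 : C) ∈ β.ker := by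
      rw [MonoidHom.mem_ker]; exact Function.surjInv_eq hβ 1
    exact hzero _ this
  · intro c1 c2
    set x := Function.surjInv hβ c1 with hx
    set y := Function.surjInv hβ c2 with hy
    have hbx : β x = c1 := Function.surjInv_eq hβ c1
    have hby : β y = c2 := Function.surjInv_eq hβ c2
    have hxy : β (Function.surjInv hβ (c1 * c2)) = β (x * y) := by
      rw [Function.surjInv_eq hβ, map_mul, hbx, hby]
    have := hcob x y
    rw [hbx, hby] at this
    rw [this]
    show _ = h (Function.surjInv hβ (c1 * c2)) - h x - h y
    rw [hconst _ _ hxy]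
end

section
/- Let A be a finite abelian group, C a group, and ω ∈ Z²(C, A) a 2-cocycle with associated central extension B = C ×_ω A. Suppose B has no proper finite-index subgroup. Then for every finite abelian group Z, the connecting map ω_* : Hom(A, Z) → H²(C, Z), α ↦ [α ∘ ω], is an injective group homomorphism. -/
/-- The abelian group of (normalized) 2-cocycles on `G` with values in `Z`
(trivial action). -/
def Z2 (G Z : Type*) [Group G] [AddCommGroup Z] : AddSubgroup (G → G → Z) where
  carrier := {f | IsCocycle f}
  zero_mem' := ⟨fun _ => rfl, fun _ => rfl, fun _ _ _ => by simp⟩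
  add_mem' := by
    rintro f g ⟨hf1, hf2, hf3⟩ ⟨hg1, hg2, hg3⟩
    refine ⟨fun x => by simp [hf1 x, hg1 x], fun x => by simp [hf2 x, hg2 x],
      fun x y z => ?_⟩
    simp only [Pi.add_apply]
    rw [add_add_add_comm, hf3, hg3, add_add_add_comm]
  neg_mem' := by
    rintro f ⟨hf1, hf2, hf3⟩
    refine ⟨fun x => by simp [hf1 x], fun x => by simp [hf2 x], fun x y z => ?_⟩
    simp only [Pi.neg_apply, ← neg_add, hf3]

/-- The subgroup of 2-coboundaries inside the group of 2-cocycles. -/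
def B2 (G Z : Type*) [Group G] [AddCommGroup Z] : AddSubgroup (Z2 G Z) where
  carrier := {f | IsCoboundary (f : G → G → Z)}
  zero_mem' := ⟨0, rfl, by simp⟩
  add_mem' := by
    rintro f g ⟨h1, e1, H1⟩ ⟨h2, e2, H2⟩
    refine ⟨h1 + h2, by simp [e1, e2], fun x y => ?_⟩
    have : ((f + g : Z2 G Z) : G → G → Z) x y = (f : G → G → Z) x y + (g : G → G → Z) x y := rfl
    rw [this, H1, H2]
    simp only [Pi.add_apply]
    abel
  neg_mem' := by
    rintro f ⟨h1, e1, H1⟩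
    refine ⟨-h1, by simp [e1], fun x y => ?_⟩
    have : ((-f : Z2 G Z) : G → G → Z) x y = -((f : G → G → Z) x y) := rfl
    rw [this, H1]
    simp only [Pi.neg_apply]
    abel

/-- Second group cohomology with trivial coefficients: 2-cocycles modulo
2-coboundaries. -/
def H2 (G Z : Type*) [Group G] [AddCommGroup Z] : Type _ :=
  Z2 G Z ⧸ B2 G Z

instance (G Z : Type*) [Group G] [AddCommGroup Z] : AddCommGroup (H2 G Z) :=
  QuotientAddGroup.Quotient.addCommGroup (B2 G Z)

/-- The class of a 2-cocycle in `H2 G Z`. -/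
def H2.mk {G Z : Type*} [Group G] [AddCommGroup Z] (f : Z2 G Z) : H2 G Z :=
  QuotientAddGroup.mk f

/-- let `ω ∈ Z²(C, A)` with `A` finite abelian, and let `B` be the
associated central extension `C ×_ω A` (a group whose multiplication is given,
through the bijection `e`, by `(c₁,a₁)(c₂,a₂) = (c₁c₂, a₁ + a₂ + ω c₁ c₂)`).
If `B` has no proper finite-index subgroup, then for every finite abelian `Z`
the connecting map `ω_* : Hom(A, Z) → H²(C, Z)`, `α ↦ [α ∘ ω]`, is an injective
group homomorphism. -/
theorem stmt9 {C A B Z : Type*} [Group C] [AddCommGroup A] [Finite A]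
    [Group B] [AddCommGroup Z] [Finite Z]
    (ω : C → C → A) (hω : IsCocycle ω)
    (e : B ≃ C × A)
    (hmul : ∀ b₁ b₂ : B, e (b₁ * b₂) =
      ((e b₁).1 * (e b₂).1, (e b₁).2 + (e b₂).2 + ω (e b₁).1 (e b₂).1))
    (hB : NoFiniteIndex B) :
    ∃ Ω : (A →+ Z) →+ H2 C Z,
      (∀ (α : A →+ Z) (g : Z2 C Z),
        (∀ x y : C, (g : C → C → Z) x y = α (ω x y)) → Ω α = H2.mk g) ∧
      Function.Injective Ω := by
  obtain ⟨hω1, hω2, hω3⟩ := hω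
  -- the pushforward cocycle
  have mem : ∀ α : A →+ Z, IsCocycle (fun x y => α (ω x y)) := by
    intro α
    refine ⟨fun x => by simp [hω1 x], fun x => by simp [hω2 x], fun x y z => ?_⟩
    rw [← map_add, ← map_add, hω3]
  set Ω : (A →+ Z) →+ H2 C Z :=
    { toFun := fun α => H2.mk ⟨fun x y => α (ω x y), mem α⟩
      map_zero' := by
        have : (⟨fun x y => (0 : A →+ Z) (ω x y), mem 0⟩ : Z2 C Z) = 0 := by
          ext x y; rfl
        simp only [this]; rfl
      map_add' := by
        intro α β
        have : (⟨fun x y => (α + β) (ω x y), mem (α + β)⟩ : Z2 C Z) =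
            ⟨fun x y => α (ω x y), mem α⟩ + ⟨fun x y => β (ω x y), mem β⟩ := by
          ext x y; rfl
        simp only [this]; rfl } with hΩ
  refine ⟨Ω, fun α g hg => ?_, ?_⟩
  · have : (⟨fun x y => α (ω x y), mem α⟩ : Z2 C Z) = g := by
      ext x y; exact (hg x y).symm
    simp only [hΩ, AddMonoidHom.coe_mk, ZeroHom.coe_mk, this]
  · -- injectivity: suffices kernel trivial
    intro α β hαβ
    rw [← sub_eq_zero]
    set γ := α - β with hγ
    have h0 : Ω γ = 0 := by rw [hγ, map_sub, hαβ, sub_self]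
    -- Ω γ = 0 means α∘ω is a coboundary
    have hcb : IsCoboundary (fun x y => γ (ω x y) : C → C → Z) := by
      have := (QuotientAddGroup.eq_zero_iff
        (⟨fun x y => γ (ω x y), mem γ⟩ : Z2 C Z)).mp h0
      exact this
    obtain ⟨h, h1, hh⟩ := hcb
    -- build a homomorphism B → Multiplicative Z
    let f : B →* Multiplicative Z :=
      { toFun := fun b => Multiplicative.ofAdd (γ (e b).2 - h (e b).1)
        map_one' := by
          have he1 : e (1 : B) = (1, 0) := by
            have heq := hmul 1 1
            rw [mul_one] at heq
            have h2 : (e (1:B)).2 = (e (1:B)).2 + (e (1:B)).2 + ω (e (1:B)).1 (e (1:B)).1 :=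
              congrArg Prod.snd heq
            have h1' : (e (1:B)).1 = (e (1:B)).1 * (e (1:B)).1 := congrArg Prod.fst heq
            have hc : (e (1:B)).1 = 1 := mul_eq_left.mp h1'.symm
            rw [hc, hω1, add_zero] at h2
            have ha : (e (1:B)).2 = 0 := add_eq_left.mp h2.symm
            exact Prod.ext hc ha
          simp [he1, h1]
        map_mul' := by
          intro b₁ b₂
          rw [hmul b₁ b₂]
          rw [← ofAdd_add]
          congr 1
          have hh' : ∀ x y : C, γ (ω x y) = h (x*y) - h x - h y := hh
          rw [map_add, map_add]
          dsimp only
          rw [hh']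
          abel }
    have hker : f.ker = ⊤ := by
      apply hB
      rw [Subgroup.index_ker]
      exact Nat.card_ne_zero.mpr ⟨⟨1, 1, map_one f⟩, inferInstance⟩
    have hf : ∀ b : B, f b = 1 := fun b => MonoidHom.mem_ker.mp (hker ▸ Subgroup.mem_top b)
    ext a
    have hfa := hf (e.symm (1, a))
    simp only [f, MonoidHom.coe_mk, OneHom.coe_mk, Equiv.apply_symm_apply] at hfa
    have : γ a - h 1 = 0 := by
      have := congrArg Multiplicative.toAdd hfa
      simpa using this
    rw [h1, sub_zero] at this
    simpa [hγ] using this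
end

section
/- Let A be a finite abelian group, C a group, and ω ∈ Z²(C, A) a 2-cocycle with B = C ×_ω A the associated central extension, β : B → C the projection. Suppose B has no proper finite-index subgroup. Then for every finite abelian group Z, the sequence 0 → Hom(A, Z) → H²(C, Z) → H²(B, Z) is exact, where the first map is α ↦ [α ∘ ω] and the second is inflation [f] ↦ [f ∘ (β × β)]. -/
section Aux

variable {C B Z A : Type*} [Group C] [AddCommGroup A] [Group B] [AddCommGroup Z]

/-- The cocycle `α ∘ ω` obtained from a cocycle `ω` and a homomorphism `α`. -/
def cocOfHom (ω : C → C → A) (hω : IsCocycle ω) (α : A →+ Z) : Z2 C Z :=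
  ⟨fun x y => α (ω x y),
   ⟨fun x => by show α (ω x 1) = 0; rw [hω.1 x, map_zero],
    fun x => by show α (ω 1 x) = 0; rw [hω.2.1 x, map_zero],
    fun x y z => by
      show α (ω x y) + α (ω (x * y) z) = α (ω x (y * z)) + α (ω y z)
      rw [← map_add, ← map_add, hω.2.2]⟩⟩

/-- Pullback (inflation) of cocycles along a group homomorphism. -/
def pullZ2 (β : B →* C) : Z2 C Z →+ Z2 B Z where
  toFun f := ⟨fun x y => (f : C → C → Z) (β x) (β y), by
    have hf : IsCocycle (f : C → C → Z) := f.2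
    obtain ⟨h1, h2, h3⟩ := hf
    exact ⟨fun x => by show (f : C → C → Z) (β x) (β 1) = 0; rw [map_one]; exact h1 _,
      fun x => by show (f : C → C → Z) (β 1) (β x) = 0; rw [map_one]; exact h2 _,
      fun x y z => by
        show (f : C → C → Z) (β x) (β y) + (f : C → C → Z) (β (x * y)) (β z)
          = (f : C → C → Z) (β x) (β (y * z)) + (f : C → C → Z) (β y) (β z)
        simp only [map_mul]; exact h3 _ _ _⟩⟩
  map_zero' := rfl
  map_add' _ _ := rfl

lemma pullZ2_le (β : B →* C) :
    B2 C Z ≤ (B2 B Z).comap (pullZ2 β) := by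
  rintro f ⟨h, h1, H⟩
  refine ⟨h ∘ β, by simp [h1], fun x y => ?_⟩
  show (f : C → C → Z) (β x) (β y) = h (β (x * y)) - h (β x) - h (β y)
  rw [map_mul]
  exact H _ _

end Aux

/-- with `B = C ×_ω A` the central extension determined by
`ω ∈ Z²(C, A)` (`A` finite abelian), `β : B → C` the projection, and `B` having
no proper finite-index subgroup, for every finite abelian `Z` the sequence
`0 → Hom(A, Z) → H²(C, Z) → H²(B, Z)` is exact, the maps being `α ↦ [α ∘ ω]`
and inflation `[f] ↦ [f ∘ (β × β)]`. -/
theorem stmt10 {C A B Z : Type*} [Group C] [AddCommGroup A] [Finite A]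
    [Group B] [AddCommGroup Z] [Finite Z]
    (ω : C → C → A) (hω : IsCocycle ω)
    (e : B ≃ C × A)
    (hmul : ∀ b₁ b₂ : B, e (b₁ * b₂) =
      ((e b₁).1 * (e b₂).1, (e b₁).2 + (e b₂).2 + ω (e b₁).1 (e b₂).1))
    (β : B →* C) (hproj : ∀ b : B, β b = (e b).1)
    (hB : NoFiniteIndex B) :
    ∃ (Ω : (A →+ Z) →+ H2 C Z) (infl : H2 C Z →+ H2 B Z),
      (∀ (α : A →+ Z) (g : Z2 C Z),
        (∀ x y : C, (g : C → C → Z) x y = α (ω x y)) → Ω α = H2.mk g) ∧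
      (∀ (f : Z2 C Z) (g : Z2 B Z),
        (∀ x y : B, (g : B → B → Z) x y = (f : C → C → Z) (β x) (β y)) →
          infl (H2.mk f) = H2.mk g) ∧
      Function.Injective Ω ∧ Ω.range = infl.ker := by
  have hω1 : ∀ x : C, ω x 1 = 0 := hω.1
  have hω1' : ∀ x : C, ω 1 x = 0 := hω.2.1
  -- `e 1 = (1, 0)`
  have he1 : e 1 = (1, 0) := by
    have h := hmul 1 1
    rw [mul_one] at h
    have h1 : (e 1).1 = 1 := by
      have := congrArg Prod.fst h
      exact mul_eq_left.mp this.symm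
    have h2 : (e 1).2 = 0 := by
      have h' := congrArg Prod.snd h
      rw [h1, hω1' 1, add_zero] at h'
      have : (e 1).2 + 0 = (e 1).2 + (e 1).2 := by rw [add_zero]; exact h'
      exact (add_left_cancel this).symm
    exact Prod.ext h1 h2
  have hsymm1 : e.symm (1, 0) = 1 := by rw [← he1, Equiv.symm_apply_apply]
  have hβsymm : ∀ (c : C) (a : A), β (e.symm (c, a)) = c := fun c a => by
    rw [hproj, Equiv.apply_symm_apply]
  have hAmul : ∀ a₁ a₂ : A, e.symm (1, a₁) * e.symm (1, a₂) = e.symm (1, a₁ + a₂) := by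
    intro a₁ a₂
    apply e.injective
    rw [hmul]
    simp [Equiv.apply_symm_apply, hω1']
  have hsmul : ∀ c₁ c₂ : C, e.symm (c₁, 0) * e.symm (c₂, 0)
      = e.symm (c₁ * c₂, 0) * e.symm (1, ω c₁ c₂) := by
    intro c₁ c₂
    apply e.injective
    rw [hmul, hmul]
    simp [Equiv.apply_symm_apply, hω1]
  refine ⟨AddMonoidHom.mk' (fun α => H2.mk (cocOfHom ω hω α)) (fun α₁ α₂ => rfl),
    QuotientAddGroup.map (B2 C Z) (B2 B Z) (pullZ2 β) (pullZ2_le β), ?_, ?_, ?_, ?_⟩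
  · -- spec of Ω
    intro α g hg
    have hgeq : g = cocOfHom ω hω α := Subtype.ext (funext fun x => funext fun y => hg x y)
    rw [hgeq]
    rfl
  · -- spec of infl
    intro f g hg
    have hgeq : g = pullZ2 β f := Subtype.ext (funext fun x => funext fun y => hg x y)
    rw [hgeq]
    exact QuotientAddGroup.map_mk _ _ _ _ f
  · -- injectivity
    rw [injective_iff_map_eq_zero]
    intro α hα
    have hmem : cocOfHom ω hω α ∈ B2 C Z :=
      (QuotientAddGroup.eq_zero_iff _).mp hα
    obtain ⟨h, h1, H⟩ := hmem
    -- build a homomorphism B → Z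
    set φ : B →* Multiplicative Z := MonoidHom.mk'
      (fun b => Multiplicative.ofAdd (α (e b).2 - h (e b).1)) (by
        intro b₁ b₂
        show Multiplicative.ofAdd (α (e (b₁ * b₂)).2 - h (e (b₁ * b₂)).1)
          = Multiplicative.ofAdd (α (e b₁).2 - h (e b₁).1)
            * Multiplicative.ofAdd (α (e b₂).2 - h (e b₂).1)
        rw [hmul, ← ofAdd_add]
        apply congrArg Multiplicative.ofAdd
        have hH : α (ω (e b₁).1 (e b₂).1)
            = h ((e b₁).1 * (e b₂).1) - h (e b₁).1 - h (e b₂).1 := H (e b₁).1 (e b₂).1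
        show α ((e b₁).2 + (e b₂).2 + ω (e b₁).1 (e b₂).1) - h ((e b₁).1 * (e b₂).1)
          = (α (e b₁).2 - h (e b₁).1) + (α (e b₂).2 - h (e b₂).1)
        rw [map_add, map_add, hH]
        abel) with hφdef
    have hker : φ.ker = ⊤ := by
      apply hB
      rw [Subgroup.index_ker]
      exact Nat.card_pos.ne'
    have hφ1 : ∀ b, φ b = 1 := fun b => MonoidHom.mem_ker.mp (hker ▸ Subgroup.mem_top b)
    ext a
    have hb := hφ1 (e.symm (1, a))
    have hb2 : Multiplicative.ofAdd
        (α ((e (e.symm (1, a))).2) - h ((e (e.symm (1, a))).1)) = 1 := hb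
    rw [Equiv.apply_symm_apply] at hb2
    have hb3 : α a - h 1 = 0 := by
      have := ofAdd_eq_one.mp hb2
      simpa using this
    rw [h1, sub_zero] at hb3
    simpa using hb3
  · -- range = kernel
    apply le_antisymm
    · rintro x ⟨α, rfl⟩
      apply AddMonoidHom.mem_ker.mpr
      show QuotientAddGroup.map (B2 C Z) (B2 B Z) (pullZ2 β) (pullZ2_le β)
        (H2.mk (cocOfHom ω hω α)) = 0
      have : QuotientAddGroup.map (B2 C Z) (B2 B Z) (pullZ2 β) (pullZ2_le β)
          (H2.mk (cocOfHom ω hω α))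
          = QuotientAddGroup.mk (pullZ2 β (cocOfHom ω hω α)) :=
        QuotientAddGroup.map_mk _ _ _ _ _
      rw [this, QuotientAddGroup.eq_zero_iff]
      refine ⟨fun b => α (e b).2, by show α (e (1 : B)).2 = 0; rw [he1]; exact map_zero α, fun x y => ?_⟩
      show α (ω (β x) (β y)) = α (e (x * y)).2 - α (e x).2 - α (e y).2
      rw [hproj, hproj, hmul, map_add, map_add]
      abel
    · intro x hx
      induction x using QuotientAddGroup.induction_on with
      | H f =>
      replace hx := AddMonoidHom.mem_ker.mp hx
      have hx2 : QuotientAddGroup.mk (pullZ2 β f) = (0 : H2 B Z) := by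
        rw [← hx]
        exact (QuotientAddGroup.map_mk _ _ _ _ f).symm
      have hmem : pullZ2 β f ∈ B2 B Z := (QuotientAddGroup.eq_zero_iff _).mp hx2
      obtain ⟨h, h1, H⟩ := hmem
      have hf1 : ∀ c : C, (f : C → C → Z) c 1 = 0 := f.2.1
      -- H : ∀ x y : B, f (β x) (β y) = h (x*y) - h x - h y
      have Hf : ∀ x y : B, (f : C → C → Z) (β x) (β y) = h (x * y) - h x - h y := H
      -- the homomorphism α
      have hadd : ∀ a₁ a₂ : A, h (e.symm (1, a₁ + a₂))
          = h (e.symm (1, a₁)) + h (e.symm (1, a₂)) := by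
        intro a₁ a₂
        have hh := Hf (e.symm (1, a₁)) (e.symm (1, a₂))
        rw [hβsymm, hβsymm, hAmul, hf1 1] at hh
        rw [sub_sub] at hh
        exact sub_eq_zero.mp hh.symm
      set α : A →+ Z := AddMonoidHom.mk' (fun a => h (e.symm (1, a)))
        (fun a₁ a₂ => hadd a₁ a₂) with hαdef
      refine ⟨α, ?_⟩
      show (QuotientAddGroup.mk (cocOfHom ω hω α) : H2 C Z) = QuotientAddGroup.mk f
      rw [QuotientAddGroup.eq]
      refine ⟨fun c => h (e.symm (c, 0)), by show h (e.symm ((1 : C), (0 : A))) = 0; rw [hsymm1, h1], fun c₁ c₂ => ?_⟩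
      show -(α (ω c₁ c₂)) + (f : C → C → Z) c₁ c₂
        = h (e.symm (c₁ * c₂, 0)) - h (e.symm (c₁, 0)) - h (e.symm (c₂, 0))
      have key1 := Hf (e.symm (c₁, 0)) (e.symm (c₂, 0))
      rw [hβsymm, hβsymm, hsmul] at key1
      have key2 := Hf (e.symm (c₁ * c₂, 0)) (e.symm (1, ω c₁ c₂))
      rw [hβsymm, hβsymm, hf1] at key2
      -- key2 : 0 = h (prod) - h (e.symm (c₁ c₂,0)) - h (e.symm (1, ω c₁ c₂))
      have key3 : h (e.symm (c₁ * c₂, 0) * e.symm (1, ω c₁ c₂))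
          = h (e.symm (c₁ * c₂, 0)) + h (e.symm (1, ω c₁ c₂)) := by
        rw [sub_sub] at key2
        exact sub_eq_zero.mp key2.symm
      rw [key3] at key1
      have hαω : α (ω c₁ c₂) = h (e.symm (1, ω c₁ c₂)) := rfl
      rw [hαω, key1]
      abel
end

section
/- Let G be a group which is the product G = A·B of two normal subgroups A and B with A ∩ B finite, and suppose G has no proper finite-index subgroup. Suppose moreover that A has no proper finite-index subgroup. Then A and B commute elementwise: [a, b] = 1 for all a ∈ A, b ∈ B. -/
/-- if `G = A·B` with `A, B` normal, `A ∩ B` finite, `G` and `A`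
have no proper finite-index subgroup, then `A` and `B` commute elementwise. -/
theorem stmt12 {G : Type*} [Group G] (A B : Subgroup G)
    (hAn : A.Normal) (hBn : B.Normal)
    (hprod : ∀ g : G, ∃ a ∈ A, ∃ b ∈ B, g = a * b)
    (hfin : Finite ↥(A ⊓ B))
    (hG : NoFiniteIndex G) (hA : NoFiniteIndex A) :
    ∀ a ∈ A, ∀ b ∈ B, a * b = b * a := by
  haveI : (A ⊓ B).Normal := @Subgroup.normal_inf_normal G _ A B hAn hBn
  -- conjugation action on the finite normal subgroup A ⊓ B
  set f : G →* MulAut ↥(A ⊓ B) := MulAut.conjNormal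
  haveI : Finite (MulAut ↥(A ⊓ B)) :=
    Finite.of_injective (fun e => (e : ↥(A ⊓ B) → ↥(A ⊓ B)))
      fun e₁ e₂ h => MulEquiv.ext (congrFun h)
  have hker : f.ker = ⊤ := by
    apply hG
    rw [Subgroup.index_ker f]
    exact Nat.card_pos.ne'
  -- hence A ⊓ B is central
  have hc : ∀ n ∈ A ⊓ B, ∀ g : G, g * n = n * g := by
    intro n hn g
    have hg : f g = 1 := by
      have : g ∈ f.ker := hker ▸ Subgroup.mem_top g
      rwa [MonoidHom.mem_ker] at this
    have := congrArg (Subtype.val) (congrFun (congrArg (fun e : MulAut ↥(A ⊓ B) => (e : ↥(A ⊓ B) → ↥(A ⊓ B))) hg) ⟨n, hn⟩)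
    simp only [MulAut.one_apply] at this
    have h2 : g * n * g⁻¹ = n := by
      simpa [f, MulAut.conjNormal_apply] using this
    calc g * n = (g * n * g⁻¹) * g := by group
    _ = n * g := by rw [h2]
  intro a ha b hb
  -- the commutator map A → A ⊓ B
  have hmem : ∀ a ∈ A, a * b * a⁻¹ * b⁻¹ ∈ A ⊓ B := by
    intro x hx
    constructor
    · have : x * (b * x⁻¹ * b⁻¹) ∈ A := A.mul_mem hx (hAn.conj_mem _ (A.inv_mem hx) b)
      simpa [mul_assoc] using this
    · exact B.mul_mem (hBn.conj_mem _ hb x) (B.inv_mem hb)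
  let φ : ↥A →* ↥(A ⊓ B) :=
    { toFun := fun x => ⟨(x : G) * b * (x : G)⁻¹ * b⁻¹, hmem x x.2⟩
      map_one' := by ext; simp
      map_mul' := by
        intro a₁ a₂
        ext
        show ((a₁ : G) * a₂) * b * ((a₁ : G) * a₂)⁻¹ * b⁻¹
            = ((a₁ : G) * b * (a₁ : G)⁻¹ * b⁻¹) * ((a₂ : G) * b * (a₂ : G)⁻¹ * b⁻¹)
        have hm₂ := hmem _ a₂.2
        calc ((a₁ : G) * a₂) * b * ((a₁ : G) * a₂)⁻¹ * b⁻¹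
            = (a₁ : G) * (((a₂ : G) * b * (a₂ : G)⁻¹ * b⁻¹) * (b * (a₁ : G)⁻¹ * b⁻¹)) := by
              group
          _ = ((a₂ : G) * b * (a₂ : G)⁻¹ * b⁻¹) * ((a₁ : G) * (b * (a₁ : G)⁻¹ * b⁻¹)) := by
              rw [← mul_assoc, hc _ hm₂ (a₁ : G), mul_assoc]
          _ = ((a₂ : G) * b * (a₂ : G)⁻¹ * b⁻¹) * ((a₁ : G) * b * (a₁ : G)⁻¹ * b⁻¹) := by
              group
          _ = ((a₁ : G) * b * (a₁ : G)⁻¹ * b⁻¹) * ((a₂ : G) * b * (a₂ : G)⁻¹ * b⁻¹) :=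
              (hc _ hm₂ _).symm }
  have hkerφ : φ.ker = ⊤ := by
    apply hA
    rw [Subgroup.index_ker φ]
    exact Nat.card_pos.ne'
  have : φ ⟨a, ha⟩ = 1 := by
    have : (⟨a, ha⟩ : ↥A) ∈ φ.ker := hkerφ ▸ Subgroup.mem_top _
    rwa [MonoidHom.mem_ker] at this
  have h1 : a * b * a⁻¹ * b⁻¹ = 1 := congrArg Subtype.val this
  calc a * b = (a * b * a⁻¹ * b⁻¹) * (b * a) := by group
  _ = b * a := by rw [h1, one_mul]
end
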